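/- arXiv:1706.04659 — 2 statements merged into one kernel-verified Lean document; each statement's English description precedes it below -/
import Mathlib

section
/- For all frequencies ξ, ξ₁, ξ₂, ξ₃ ∈ ℝ^d with ξ = ξ₁ - ξ₂ - ξ₃, and any σ ≥ 0, one has 1 - exp(-σ(|ξ₁| + |ξ₂| + |ξ₃| - |ξ|)) ≤ 12 σ ξ_med, where ξ_med denotes the median of the three numbers |ξ₁|, |ξ₂|, |ξ₃|. -/
/-!
The largest of `‖ξ₁‖, ‖ξ₂‖, ‖ξ₃‖` is at most the sum of the other two plus `‖ξ‖`, so the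
defect `‖ξ₁‖ + ‖ξ₂‖ + ‖ξ₃‖ - ‖ξ‖` is at most twice the sum of the two smaller norms, hence at
most `4 ξ_med`. Combined with `1 - e^{-x} ≤ x` this gives the bound with `4` in place of `12`.
-/

noncomputable def median3 (a b c : ℝ) : ℝ := max (min a b) (min (max a b) c)

theorem median3_nonneg {a b c : ℝ} (ha : 0 ≤ a) (hb : 0 ≤ b) : 0 ≤ median3 a b c :=
  le_max_of_le_left (le_min ha hb)

theorem add_add_sub_le_four_mul_median3 {a b c s : ℝ} (ha : a ≤ b + c + s)
    (hb : b ≤ a + c + s) (hc : c ≤ a + b + s) : a + b + c - s ≤ 4 * median3 a b c := by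
  unfold median3
  rcases le_total a b with hab | hab <;> rcases le_total b c with hbc | hbc <;>
    rcases le_total a c with hac | hac <;>
    simp only [min_eq_left, min_eq_right, max_eq_left, max_eq_right, hab, hbc, hac] <;>
    linarith

section NormedGroup

variable {E : Type*} [SeminormedAddCommGroup E]

theorem norm_sub_sub_le (a b c : E) : ‖a - b - c‖ ≤ ‖a‖ + ‖b‖ + ‖c‖ :=
  (norm_sub_le _ _).trans (add_le_add_left (norm_sub_le _ _) _)

theorem norm_add_norm_add_norm_sub_norm_le_four_mul_median3 {ξ ξ₁ ξ₂ ξ₃ : E}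
    (hξ : ξ = ξ₁ - ξ₂ - ξ₃) :
    ‖ξ₁‖ + ‖ξ₂‖ + ‖ξ₃‖ - ‖ξ‖ ≤ 4 * median3 ‖ξ₁‖ ‖ξ₂‖ ‖ξ₃‖ := by
  subst hξ
  apply add_add_sub_le_four_mul_median3
  · calc ‖ξ₁‖ = ‖ξ₂ + ξ₃ + (ξ₁ - ξ₂ - ξ₃)‖ := by congr 1; abel
      _ ≤ _ := norm_add₃_le
  · calc ‖ξ₂‖ = ‖ξ₁ - ξ₃ - (ξ₁ - ξ₂ - ξ₃)‖ := by congr 1; abel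
      _ ≤ _ := norm_sub_sub_le _ _ _
  · calc ‖ξ₃‖ = ‖ξ₁ - ξ₂ - (ξ₁ - ξ₂ - ξ₃)‖ := by congr 1; abel
      _ ≤ _ := norm_sub_sub_le _ _ _

end NormedGroup

/-- For frequencies `ξ = ξ₁ - ξ₂ - ξ₃` in `ℝ^d` and `σ ≥ 0`,
`1 - exp (-σ(|ξ₁|+|ξ₂|+|ξ₃|-|ξ|)) ≤ 12 σ ξ_med` where `ξ_med` is the median of
`|ξ₁|, |ξ₂|, |ξ₃|`. -/
theorem one_sub_exp_le_twelve_sigma_med {d : ℕ}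
    (ξ ξ₁ ξ₂ ξ₃ : EuclideanSpace ℝ (Fin d)) (hξ : ξ = ξ₁ - ξ₂ - ξ₃)
    (σ : ℝ) (hσ : 0 ≤ σ) :
    1 - Real.exp (-(σ * (‖ξ₁‖ + ‖ξ₂‖ + ‖ξ₃‖ - ‖ξ‖))) ≤
      12 * σ * median3 ‖ξ₁‖ ‖ξ₂‖ ‖ξ₃‖ := by
  set m := median3 ‖ξ₁‖ ‖ξ₂‖ ‖ξ₃‖
  have hm : 0 ≤ m := median3_nonneg (norm_nonneg _) (norm_nonneg _)
  calc 1 - Real.exp (-(σ * (‖ξ₁‖ + ‖ξ₂‖ + ‖ξ₃‖ - ‖ξ‖)))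
      ≤ σ * (‖ξ₁‖ + ‖ξ₂‖ + ‖ξ₃‖ - ‖ξ‖) :=
        sub_le_comm.mp (Real.one_sub_le_exp_neg _)
    _ ≤ σ * (4 * m) :=
      mul_le_mul_of_nonneg_left (norm_add_norm_add_norm_sub_norm_le_four_mul_median3 hξ) hσ
    _ ≤ 12 * σ * m := by nlinarith [mul_nonneg hσ hm]
end

section
/- Let v : [0,δ] × ℝ^d → ℂ be a smooth, spatially decaying solution of i∂ₜv + Δv = |v|²v + f(v). Then d/dt ∫_{ℝ^d} (|∇v|² + (1/2)|v|⁴) dx = -2 Im ∫_{ℝ^d} (|v|²v \overline{f(v)} - \overline{∇v}·∇f(v)) dx. -/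
open MeasureTheory Complex

noncomputable section

variable {d : ℕ}

local notation "Sp" => EuclideanSpace ℝ (Fin d)


/-- slice derivative in time -/
lemma sliceT {u : ℝ × Sp → ℂ} (hu : Differentiable ℝ u) (s : ℝ) (x : Sp) :
    HasDerivAt (fun τ => u (τ, x)) (fderiv ℝ u (s, x) (1, 0)) s := by
  have h := (hu (s, x)).hasFDerivAt.comp_hasDerivAt s
    ((hasDerivAt_id s).prodMk (hasDerivAt_const s x))
  exact h

lemma sliceX {u : ℝ × Sp → ℂ} (hu : Differentiable ℝ u) (s : ℝ) (x : Sp) :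
    HasFDerivAt (fun z => u (s, z))
      ((fderiv ℝ u (s, x)).comp ((0 : Sp →L[ℝ] ℝ).prod (ContinuousLinearMap.id ℝ Sp))) x := by
  have h := (hu (s, x)).hasFDerivAt.comp x
    ((hasFDerivAt_const s x).prodMk (hasFDerivAt_id x))
  exact h

lemma sliceX_fderiv {u : ℝ × Sp → ℂ} (hu : Differentiable ℝ u) (s : ℝ) (x : Sp) (b : Sp) :
    fderiv ℝ (fun z => u (s, z)) x b = fderiv ℝ u (s, x) (0, b) := by
  rw [(sliceX hu s x).fderiv]; simp

/-- mixed partials symmetry -/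
lemma mixedSymm {u : ℝ × Sp → ℂ} (hu : ContDiff ℝ (⊤ : ℕ∞) u) (p a b : ℝ × Sp) :
    fderiv ℝ (fun q => fderiv ℝ u q a) p b = fderiv ℝ (fun q => fderiv ℝ u q b) p a := by
  have hΦ : Differentiable ℝ (fderiv ℝ u) := (hu.fderiv_right (m := 1) (by exact WithTop.coe_le_coe.mpr (le_top : ((1 + 1 : ℕ) : ℕ∞) ≤ ⊤))).differentiable one_ne_zero
  have h1 : ∀ y, HasFDerivAt u (fderiv ℝ u y) y := fun y =>
    (hu.differentiable (by simp) y).hasFDerivAt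
  have h2 : HasFDerivAt (fderiv ℝ u) (fderiv ℝ (fderiv ℝ u) p) p := (hΦ p).hasFDerivAt
  have e : ∀ c : ℝ × Sp, fderiv ℝ (fun q => fderiv ℝ u q c) p =
      (ContinuousLinearMap.apply ℝ ℂ c).comp (fderiv ℝ (fderiv ℝ u) p) := by
    intro c
    exact (((ContinuousLinearMap.apply ℝ ℂ c).hasFDerivAt).comp p h2).fderiv
  rw [e a, e b]
  exact second_derivative_symmetric h1 h2 b a

/-- derivative of squared norm -/
lemma hasDerivAt_normSq' {u : ℝ → ℂ} {u' : ℂ} {s : ℝ} (h : HasDerivAt u u' s) :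
    HasDerivAt (fun τ => ‖u τ‖ ^ 2) (2 * ((starRingEnd ℂ) (u s) * u').re) s := by
  have hre : HasDerivAt (fun τ => (u τ).re) u'.re s := by
    exact (Complex.reCLM.hasFDerivAt (x := u s)).comp_hasDerivAt s h
  have him : HasDerivAt (fun τ => (u τ).im) u'.im s := by
    exact (Complex.imCLM.hasFDerivAt (x := u s)).comp_hasDerivAt s h
  have h2 : HasDerivAt (fun τ => (u τ).re ^ 2 + (u τ).im ^ 2) _ s := (hre.pow 2).add (him.pow 2)
  have hfun : (fun τ => (u τ).re ^ 2 + (u τ).im ^ 2) = fun τ => ‖u τ‖ ^ 2 := by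
    funext τ
    rw [Complex.sq_norm, Complex.normSq_apply]; ring
  rw [hfun] at h2
  convert h2 using 1
  simp [Complex.mul_re, Complex.conj_re, Complex.conj_im]; ring



lemma cintegral_re {f : Sp → ℂ} (hf : Integrable f) :
    ∫ x, (f x).re = (∫ x, f x).re := by
  simpa using integral_re hf

lemma cintegral_im {f : Sp → ℂ} (hf : Integrable f) :
    ∫ x, (f x).im = (∫ x, f x).im := by
  simpa using integral_im hf

lemma intRe {f : Sp → ℂ} (hf : Integrable f) : Integrable fun x => (f x).re := by
  simpa using hf.re

lemma fderiv_conj_apply {f : Sp → ℂ} (hf : DifferentiableAt ℝ f x) (b : Sp) :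
    fderiv ℝ (fun y => (starRingEnd ℂ) (f y)) x b = (starRingEnd ℂ) (fderiv ℝ f x b) := by
  have h := (Complex.conjCLE.toContinuousLinearMap.hasFDerivAt (x := f x)).comp x hf.hasFDerivAt
  have h' : HasFDerivAt (fun y => (starRingEnd ℂ) (f y))
      (Complex.conjCLE.toContinuousLinearMap.comp (fderiv ℝ f x)) x := h
  rw [h'.fderiv]
  rfl

/-- Integration by parts in direction `e i`. -/
lemma ibp {f h : Sp → ℂ} (i : Fin d) (hf : Differentiable ℝ f) (hh : Differentiable ℝ h)
    (h1 : Integrable (fun x => (starRingEnd ℂ) (fderiv ℝ f x (EuclideanSpace.single i 1)) * h x))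
    (h2 : Integrable (fun x => (starRingEnd ℂ) (f x) * fderiv ℝ h x (EuclideanSpace.single i 1)))
    (h3 : Integrable (fun x => (starRingEnd ℂ) (f x) * h x)) :
    ∫ x, (starRingEnd ℂ) (f x) * fderiv ℝ h x (EuclideanSpace.single i 1)
      = - ∫ x, (starRingEnd ℂ) (fderiv ℝ f x (EuclideanSpace.single i 1)) * h x := by
  have hfc : Differentiable ℝ (fun y => (starRingEnd ℂ) (f y)) :=
    fun x => (Complex.conjCLE.toContinuousLinearMap.hasFDerivAt.comp x (hf x).hasFDerivAt).differentiableAt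
  have key := integral_mul_fderiv_eq_neg_fderiv_mul_of_integrable
    (μ := (volume : Measure Sp)) (f := fun y => (starRingEnd ℂ) (f y)) (g := h)
    (v := EuclideanSpace.single i 1) ?_ ?_ ?_ (fun x _ => hfc x) (fun x _ => hh x)
  · rw [show (fun x => (starRingEnd ℂ) (fderiv ℝ f x (EuclideanSpace.single i 1)) * h x)
        = fun x => fderiv ℝ (fun y => (starRingEnd ℂ) (f y)) x (EuclideanSpace.single i 1) * h x
      from funext fun x => by rw [fderiv_conj_apply (hf x)]]
    exact key
  · apply h1.congr
    filter_upwards with x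
    rw [fderiv_conj_apply (hf x)]
  · exact h2
  · exact h3

/-- Differentiation under the integral sign for compactly supported functions. -/
lemma derivUnderIntegral {F G : ℝ × Sp → ℝ} (hFc : Continuous F) (hGc : Continuous G)
    (hFs : HasCompactSupport F) (hGs : HasCompactSupport G)
    (hd : ∀ p : ℝ × Sp, HasDerivAt (fun s => F (s, p.2)) (G p) p.1) (t : ℝ) :
    HasDerivAt (fun s => ∫ x, F (s, x)) (∫ x, G (t, x)) t := by
  have hK : IsCompact (tsupport F ∪ tsupport G) := hFs.union hGs
  set Q : Set Sp := Prod.snd '' (tsupport F ∪ tsupport G) with hQdef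
  have hQ : IsCompact Q := hK.image continuous_snd
  have hout : ∀ x ∉ Q, ∀ s : ℝ, (s, x) ∉ tsupport F ∪ tsupport G := by
    intro x hx s hs
    exact hx ⟨(s, x), hs, rfl⟩
  have hF0 : ∀ x ∉ Q, ∀ s : ℝ, F (s, x) = 0 := fun x hx s =>
    image_eq_zero_of_notMem_tsupport fun h => hout x hx s (Or.inl h)
  have hG0 : ∀ x ∉ Q, ∀ s : ℝ, G (s, x) = 0 := fun x hx s =>
    image_eq_zero_of_notMem_tsupport fun h => hout x hx s (Or.inr h)
  obtain ⟨C, hC⟩ := hGs.exists_bound_of_continuous hGc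
  have hCnn : 0 ≤ C := le_trans (norm_nonneg _) (hC (t, Classical.ofNonempty))
  have key := hasDerivAt_integral_of_dominated_loc_of_deriv_le
    (μ := (volume : Measure Sp)) (x₀ := t) (F := fun s x => F (s, x))
    (F' := fun s x => G (s, x)) (bound := Q.indicator fun _ => C) (s := Metric.ball t 1) (Metric.ball_mem_nhds t one_pos)
    ?_ ?_ ?_ ?_ ?_ ?_
  · exact key.2
  · filter_upwards with s
    exact (hFc.comp (continuous_const.prodMk continuous_id)).aestronglyMeasurable
  · apply (hFc.comp (continuous_const.prodMk continuous_id)).integrable_of_hasCompactSupport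
    exact HasCompactSupport.intro hQ fun x hx => hF0 x hx t
  · exact (hGc.comp (continuous_const.prodMk continuous_id)).aestronglyMeasurable
  · filter_upwards with x
    intro s _
    by_cases hx : x ∈ Q
    · simp only [Set.indicator_of_mem hx]
      exact hC (s, x)
    · simp [Set.indicator_of_notMem hx, hG0 x hx s]
  · rw [integrable_indicator_iff hQ.isClosed.measurableSet]
    exact integrableOn_const hQ.measure_lt_top.ne
  · filter_upwards with x
    intro s _
    exact hd (s, x)

def W1 {d : ℕ} (V : ℝ × EuclideanSpace ℝ (Fin d) → ℂ) : ℝ × EuclideanSpace ℝ (Fin d) → ℂ :=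
  fun p => fderiv ℝ V p (1, 0)

def PdV {d : ℕ} (V : ℝ × EuclideanSpace ℝ (Fin d) → ℂ) (i : Fin d) :
    ℝ × EuclideanSpace ℝ (Fin d) → ℂ :=
  fun p => fderiv ℝ V p (0, EuclideanSpace.single i 1)

def QdV {d : ℕ} (V : ℝ × EuclideanSpace ℝ (Fin d) → ℂ) (i : Fin d) :
    ℝ × EuclideanSpace ℝ (Fin d) → ℂ :=
  fun p => fderiv ℝ (W1 V) p (0, EuclideanSpace.single i 1)

def Ffun {d : ℕ} (V : ℝ × EuclideanSpace ℝ (Fin d) → ℂ) : ℝ × EuclideanSpace ℝ (Fin d) → ℝ :=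
  fun p => (∑ i : Fin d, ‖PdV V i p‖ ^ 2) + (1 / 2) * ‖V p‖ ^ 4

def Gfun {d : ℕ} (V : ℝ × EuclideanSpace ℝ (Fin d) → ℂ) : ℝ × EuclideanSpace ℝ (Fin d) → ℝ :=
  fun p => 2 * (∑ i : Fin d, ((starRingEnd ℂ) (PdV V i p) * QdV V i p).re)
    + 2 * ‖V p‖ ^ 2 * ((starRingEnd ℂ) (V p) * W1 V p).re

lemma hasDerivAt_Ffun {V : ℝ × Sp → ℂ} (hv : ContDiff ℝ (⊤ : ℕ∞) V) (p : ℝ × Sp) :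
    HasDerivAt (fun τ => Ffun V (τ, p.2)) (Gfun V p) p.1 := by
  obtain ⟨s, x⟩ := p
  have hVd : Differentiable ℝ V := hv.differentiable (by simp)
  have hPd : ∀ i : Fin d, ContDiff ℝ (⊤ : ℕ∞) (PdV V i) := fun i =>
    (hv.fderiv_right (by simp)).clm_apply contDiff_const
  have hterm : ∀ i : Fin d, HasDerivAt (fun τ => ‖PdV V i (τ, x)‖ ^ 2)
      (2 * ((starRingEnd ℂ) (PdV V i (s, x)) * QdV V i (s, x)).re) s := by
    intro i
    have hP := sliceT ((hPd i).differentiable (by simp)) s x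
    have hsym : fderiv ℝ (PdV V i) (s, x) (1, 0) = QdV V i (s, x) :=
      mixedSymm hv (s, x) (0, EuclideanSpace.single i 1) (1, 0)
    rw [hsym] at hP
    exact hasDerivAt_normSq' hP
  have hq : HasDerivAt (fun τ => (‖V (τ, x)‖ ^ 2) ^ 2) _ s := (hasDerivAt_normSq' (sliceT hVd s x)).pow 2
  have hfun : (fun τ => (‖V (τ, x)‖ ^ 2) ^ 2) = fun τ => ‖V (τ, x)‖ ^ 4 := by
    funext τ; ring
  rw [hfun] at hq
  have hsum := HasDerivAt.fun_sum (u := Finset.univ) (fun i _ => hterm i)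
  have htot : HasDerivAt (fun τ => (∑ i : Fin d, ‖PdV V i (τ, x)‖ ^ 2) + (1/2) * ‖V (τ, x)‖ ^ 4) _ s :=
    hsum.add (hq.const_mul (1 / 2 : ℝ))
  have hshape : (fun τ => (∑ i : Fin d, ‖PdV V i (τ, x)‖ ^ 2) + (1/2) * ‖V (τ, x)‖ ^ 4)
      = (fun τ => Ffun V (τ, x)) := rfl
  rw [hshape] at htot
  convert htot using 1
  simp only [Gfun, W1]
  push_cast
  simp only [Finset.sum_mul, Finset.mul_sum]
  ring

lemma keyDeriv {V : ℝ × Sp → ℂ} (hv : ContDiff ℝ (⊤ : ℕ∞) V) (hsupp : HasCompactSupport V) (t : ℝ) :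
    HasDerivAt (fun s => ∫ x, Ffun V (s, x)) (∫ x, Gfun V (t, x)) t := by
  have hVd : Differentiable ℝ V := hv.differentiable (by simp)
  have hW1 : ContDiff ℝ (⊤ : ℕ∞) (W1 V) := (hv.fderiv_right (by simp)).clm_apply contDiff_const
  have hPd : ∀ i : Fin d, ContDiff ℝ (⊤ : ℕ∞) (PdV V i) := fun i =>
    (hv.fderiv_right (by simp)).clm_apply contDiff_const
  have hQd : ∀ i : Fin d, ContDiff ℝ (⊤ : ℕ∞) (QdV V i) := fun i =>
    (hW1.fderiv_right (by simp)).clm_apply contDiff_const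
  have hFc : Continuous (Ffun V) := by
    apply Continuous.add
    · exact continuous_finset_sum _ fun i _ => ((hPd i).continuous.norm.pow 2)
    · exact continuous_const.mul (hv.continuous.norm.pow 4)
  have hGc : Continuous (Gfun V) := by
    apply Continuous.add
    · apply continuous_const.mul
      apply continuous_finset_sum _ fun i _ => ?_
      exact (Complex.continuous_re.comp (((hPd i).continuous.star).mul (hQd i).continuous))
    · exact (continuous_const.mul (hv.continuous.norm.pow 2)).mul
        (Complex.continuous_re.comp ((hv.continuous.star).mul hW1.continuous))
  -- vanishing outside tsupport V
  have hz : ∀ p ∉ tsupport V, V p = 0 := fun p hp => image_eq_zero_of_notMem_tsupport hp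
  have hzf : ∀ p ∉ tsupport V, fderiv ℝ V p = 0 := by
    intro p hp
    by_contra h
    exact hp (support_fderiv_subset ℝ (Function.mem_support.2 h))
  have hzW1 : ∀ p ∉ tsupport V, W1 V p = 0 := fun p hp => by simp [W1, hzf p hp]
  have hzPd : ∀ (i : Fin d), ∀ p ∉ tsupport V, PdV V i p = 0 := fun i p hp => by
    simp [PdV, hzf p hp]
  have hzQd : ∀ (i : Fin d), ∀ p ∉ tsupport V, QdV V i p = 0 := by
    intro i p hp
    have hsub : tsupport (W1 V) ⊆ tsupport V := by
      apply closure_minimal _ (isClosed_tsupport V)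
      intro q hq
      by_contra h
      exact Function.mem_support.1 hq (hzW1 q h)
    have : fderiv ℝ (W1 V) p = 0 := by
      by_contra h
      exact hp (hsub (support_fderiv_subset ℝ (Function.mem_support.2 h)))
    simp [QdV, this]
  have hFs : HasCompactSupport (Ffun V) := by
    apply HasCompactSupport.intro hsupp
    intro p hp
    simp [Ffun, hz p hp, hzPd _ p hp]
  have hGs : HasCompactSupport (Gfun V) := by
    apply HasCompactSupport.intro hsupp
    intro p hp
    simp [Gfun, hz p hp, hzPd _ p hp, hzQd _ p hp, hzW1 p hp]
  exact derivUnderIntegral hFc hGc hFs hGs (hasDerivAt_Ffun hv) t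

/-- The Laplacian of a function on `ℝ^d`. -/
def lap {d : ℕ} (w : EuclideanSpace ℝ (Fin d) → ℂ) (x : EuclideanSpace ℝ (Fin d)) : ℂ :=
  ∑ i : Fin d, fderiv ℝ (fun y => fderiv ℝ w y (EuclideanSpace.single i 1)) x
    (EuclideanSpace.single i 1)

/-- The `i`-th partial derivative. -/
def pd {d : ℕ} (w : EuclideanSpace ℝ (Fin d) → ℂ) (i : Fin d)
    (x : EuclideanSpace ℝ (Fin d)) : ℂ :=
  fderiv ℝ w x (EuclideanSpace.single i 1)


/-- Modified energy identity: if `v` is a smooth, spatially decaying solution of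
`i∂ₜv + Δv = |v|²v + f(v)` on `[0,δ]`, then
`d/dt ∫ (|∇v|² + ½|v|⁴) dx = -2 Im ∫ (|v|²v conj(f(v)) - conj(∇v)·∇f(v)) dx`. -/
theorem energy_identity {d : ℕ} (δ : ℝ) (hδ : 0 < δ)
    (v g : ℝ → EuclideanSpace ℝ (Fin d) → ℂ)
    (hv : ContDiff ℝ (⊤ : ℕ∞) (fun p : ℝ × EuclideanSpace ℝ (Fin d) => v p.1 p.2))
    (hg : ContDiff ℝ (⊤ : ℕ∞) (fun p : ℝ × EuclideanSpace ℝ (Fin d) => g p.1 p.2))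
    (hsupp : HasCompactSupport (fun p : ℝ × EuclideanSpace ℝ (Fin d) => v p.1 p.2))
    (hpde : ∀ t ∈ Set.Icc (0 : ℝ) δ, ∀ x,
      Complex.I * deriv (fun s => v s x) t + lap (v t) x =
        ((‖v t x‖ : ℂ) ^ 2) * v t x + g t x) :
    ∀ t ∈ Set.Ioo (0 : ℝ) δ,
      HasDerivAt (fun s => ∫ x, ((∑ i : Fin d, ‖pd (v s) i x‖ ^ 2) + (1 / 2) * ‖v s x‖ ^ 4))
        (-2 * (∫ x, (((‖v t x‖ : ℂ) ^ 2) * v t x * (starRingEnd ℂ) (g t x)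
          - ∑ i : Fin d, (starRingEnd ℂ) (pd (v t) i x) * pd (g t) i x)).im) t := by
  intro t ht
  classical
  set V : ℝ × EuclideanSpace ℝ (Fin d) → ℂ := fun p => v p.1 p.2 with hVdef
  have hVc : ContDiff ℝ (⊤ : ℕ∞) V := hv
  have hVs : HasCompactSupport V := hsupp
  have hVd : Differentiable ℝ V := hVc.differentiable (by simp)
  have hW1 : ContDiff ℝ (⊤ : ℕ∞) (W1 V) := (hVc.fderiv_right (by simp)).clm_apply contDiff_const
  have hpdsl : ∀ (s : ℝ) (i : Fin d) (x), pd (v s) i x = PdV V i (s, x) := by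
    intro s i x
    exact sliceX_fderiv hVd s x _
  have hkey := keyDeriv hVc hVs t
  have hfeq : (fun s => ∫ x, Ffun V (s, x))
      = fun s => ∫ x, ((∑ i : Fin d, ‖pd (v s) i x‖ ^ 2) + (1 / 2) * ‖v s x‖ ^ 4) := by
    funext s
    congr 1
    funext x
    simp only [Ffun, hpdsl]; rfl
  rw [hfeq] at hkey
  have hval : (∫ x, Gfun V (t, x)) = -2 * (∫ x, (((‖v t x‖ : ℂ) ^ 2) * v t x
      * (starRingEnd ℂ) (g t x)
      - ∑ i : Fin d, (starRingEnd ℂ) (pd (v t) i x) * pd (g t) i x)).im := by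
    have hIcc : t ∈ Set.Icc (0:ℝ) δ := ⟨ht.1.le, ht.2.le⟩
    have hvt : ContDiff ℝ (⊤ : ℕ∞) (v t) := hVc.comp (contDiff_const.prodMk contDiff_id)
    have hgt : ContDiff ℝ (⊤ : ℕ∞) (g t) := hg.comp (contDiff_const.prodMk contDiff_id)
    have hwsm : ContDiff ℝ (⊤ : ℕ∞) (fun x => W1 V (t, x)) :=
      hW1.comp (contDiff_const.prodMk contDiff_id)
    have hpdv : ∀ i : Fin d, ContDiff ℝ (⊤ : ℕ∞) (pd (v t) i) := fun i =>
      (hvt.fderiv_right (by simp)).clm_apply contDiff_const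
    have hpdg : ∀ i : Fin d, ContDiff ℝ (⊤ : ℕ∞) (pd (g t) i) := fun i =>
      (hgt.fderiv_right (by simp)).clm_apply contDiff_const
    have hspdc : ∀ i : Fin d, Continuous
        (fun x => fderiv ℝ (pd (v t) i) x (EuclideanSpace.single i 1)) := fun i =>
      ((((hpdv i).fderiv_right (by simp)).clm_apply contDiff_const :
        ContDiff ℝ (⊤ : ℕ∞) _)).continuous
    set Q : Set (EuclideanSpace ℝ (Fin d)) := Prod.snd '' tsupport V with hQdef
    have hQc : IsCompact Q := hVs.image continuous_snd
    have houtK : ∀ x ∉ Q, ∀ s : ℝ, (s, x) ∉ tsupport V := fun x hx s hs => hx ⟨(s,x), hs, rfl⟩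
    have hz_v : ∀ x ∉ Q, ∀ s, v s x = 0 := fun x hx s =>
      show V (s, x) = 0 from image_eq_zero_of_notMem_tsupport (houtK x hx s)
    have hQo : IsOpen Qᶜ := hQc.isClosed.isOpen_compl
    have hz_pd : ∀ (i : Fin d), ∀ x ∉ Q, pd (v t) i x = 0 := by
      intro i x hx
      have hev : v t =ᶠ[nhds x] (fun _ => (0:ℂ)) :=
        Filter.eventuallyEq_of_mem (hQo.mem_nhds hx) (fun y hy => hz_v y hy t)
      show fderiv ℝ (v t) x (EuclideanSpace.single i 1) = 0
      rw [hev.fderiv_eq, fderiv_const_apply]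
      simp
    have hz_spd : ∀ (i : Fin d), ∀ x ∉ Q,
        fderiv ℝ (pd (v t) i) x (EuclideanSpace.single i 1) = 0 := by
      intro i x hx
      have hev : pd (v t) i =ᶠ[nhds x] (fun _ => (0:ℂ)) :=
        Filter.eventuallyEq_of_mem (hQo.mem_nhds hx) (fun y hy => hz_pd i y hy)
      rw [hev.fderiv_eq, fderiv_const_apply]
      simp
    have hz_w : ∀ x ∉ Q, W1 V (t, x) = 0 := by
      intro x hx
      have h0 : fderiv ℝ V (t, x) = 0 := by
        by_contra h
        exact houtK x hx t (support_fderiv_subset ℝ (Function.mem_support.2 h))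
      simp [W1, h0]
    have hz_A : ∀ x ∉ Q, ((‖v t x‖:ℂ)^2) * v t x = 0 := fun x hx => by
      simp [hz_v x hx t]
    have hz_lap : ∀ x ∉ Q, lap (v t) x = 0 := by
      intro x hx
      apply Finset.sum_eq_zero
      intro i _
      exact hz_spd i x hx
    have intg : ∀ (h : EuclideanSpace ℝ (Fin d) → ℂ), Continuous h →
        (∀ x ∉ Q, h x = 0) → Integrable h := fun h hc h0 =>
      hc.integrable_of_hasCompactSupport (HasCompactSupport.intro hQc h0)
    have cw : Continuous (fun x => W1 V (t,x)) := hwsm.continuous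
    have cpdw : ∀ i : Fin d, Continuous (fun x =>
        fderiv ℝ (fun x' => W1 V (t,x')) x (EuclideanSpace.single i 1)) := fun i =>
      (((hwsm.fderiv_right (by simp)).clm_apply contDiff_const : ContDiff ℝ (⊤ : ℕ∞) _)).continuous
    have cA : Continuous (fun x => ((‖v t x‖:ℂ)^2) * v t x) :=
      ((Complex.continuous_ofReal.comp hvt.continuous.norm).pow 2).mul hvt.continuous
    have clap : Continuous (fun x => lap (v t) x) := by
      apply continuous_finset_sum
      intro i _
      exact hspdc i
    have I1 : ∀ i : Fin d, Integrable (fun x => (starRingEnd ℂ) (pd (v t) i x) *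
        fderiv ℝ (fun x' => W1 V (t,x')) x (EuclideanSpace.single i 1)) := fun i =>
      intg _ (((hpdv i).continuous.star).mul (cpdw i)) (fun x hx => by simp [hz_pd i x hx])
    have I2 : ∀ i : Fin d, Integrable (fun x => (starRingEnd ℂ)
        (fderiv ℝ (pd (v t) i) x (EuclideanSpace.single i 1)) * W1 V (t,x)) := fun i =>
      intg _ (((hspdc i).star).mul cw) (fun x hx => by simp [hz_spd i x hx])
    have I3 : ∀ i : Fin d, Integrable (fun x => (starRingEnd ℂ) (pd (v t) i x) * W1 V (t,x)) :=
      fun i => intg _ (((hpdv i).continuous.star).mul cw) (fun x hx => by simp [hz_pd i x hx])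
    have I4 : ∀ i : Fin d, Integrable (fun x => (starRingEnd ℂ) (pd (v t) i x) * pd (g t) i x) :=
      fun i => intg _ (((hpdv i).continuous.star).mul (hpdg i).continuous)
        (fun x hx => by simp [hz_pd i x hx])
    have I5 : ∀ i : Fin d, Integrable (fun x => (starRingEnd ℂ)
        (fderiv ℝ (pd (v t) i) x (EuclideanSpace.single i 1)) * g t x) := fun i =>
      intg _ (((hspdc i).star).mul hgt.continuous) (fun x hx => by simp [hz_spd i x hx])
    have I7 : Integrable (fun x => (starRingEnd ℂ) (((‖v t x‖:ℂ)^2) * v t x) * W1 V (t,x)) :=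
      intg _ ((cA.star).mul cw) (fun x hx => by simp [hz_v x hx t])
    have I8 : Integrable (fun x => (starRingEnd ℂ) (((‖v t x‖:ℂ)^2) * v t x) * g t x) :=
      intg _ ((cA.star).mul hgt.continuous) (fun x hx => by simp [hz_v x hx t])
    have I9 : Integrable (fun x => (((‖v t x‖:ℂ)^2) * v t x) * (starRingEnd ℂ) (g t x)) :=
      intg _ (cA.mul hgt.continuous.star) (fun x hx => by simp [hz_v x hx t])
    have I10 : Integrable (fun x => (starRingEnd ℂ) (lap (v t) x) * W1 V (t,x)) :=
      intg _ ((clap.star).mul cw) (fun x hx => by simp [hz_lap x hx])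
    have I11 : Integrable (fun x => (starRingEnd ℂ) (lap (v t) x) * g t x) :=
      intg _ ((clap.star).mul hgt.continuous) (fun x hx => by simp [hz_lap x hx])
    have I12 : Integrable (fun x => (starRingEnd ℂ) (((‖v t x‖:ℂ)^2) * v t x - lap (v t) x)
        * g t x) :=
      intg _ (((cA.sub clap).star).mul hgt.continuous)
        (fun x hx => by simp [hz_v x hx t, hz_lap x hx])
    have I13 : Integrable (fun x => ((starRingEnd ℂ) (((‖v t x‖:ℂ)^2) * v t x) -
        (starRingEnd ℂ) (lap (v t) x)) * W1 V (t,x)) :=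
      intg _ (((cA.star.sub clap.star)).mul cw)
        (fun x hx => by simp [hz_v x hx t, hz_lap x hx])
    -- PDE facts
    have hderiv_eq : ∀ x, deriv (fun s => v s x) t = W1 V (t, x) := fun x =>
      (sliceT hVd t x).deriv
    have hpde' : ∀ x, Complex.I * W1 V (t,x) + lap (v t) x =
        ((‖v t x‖:ℂ)^2) * v t x + g t x := by
      intro x
      have h := hpde t hIcc x
      rwa [hderiv_eq x] at h
    have hsolve : ∀ x, W1 V (t,x) = -Complex.I * (((‖v t x‖:ℂ)^2) * v t x + g t x
        - lap (v t) x) := by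
      intro x
      have h2 : Complex.I * W1 V (t,x) = ((‖v t x‖:ℂ)^2) * v t x + g t x - lap (v t) x := by
        linear_combination hpde' x
      calc W1 V (t,x) = -Complex.I * (Complex.I * W1 V (t,x)) := by
            rw [← mul_assoc]; simp [Complex.I_mul_I]
        _ = -Complex.I * (((‖v t x‖:ℂ)^2) * v t x + g t x - lap (v t) x) := by rw [h2]
    have I6 : ∀ i : Fin d, Integrable (fun x => (starRingEnd ℂ) (pd (v t) i x) * g t x) :=
      fun i => intg _ (((hpdv i).continuous.star).mul hgt.continuous)
        (fun x hx => by simp [hz_pd i x hx])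
    have hibpw : ∀ i : Fin d, ∫ x, (starRingEnd ℂ) (pd (v t) i x) *
        fderiv ℝ (fun x' => W1 V (t,x')) x (EuclideanSpace.single i 1)
        = - ∫ x, (starRingEnd ℂ) (fderiv ℝ (pd (v t) i) x (EuclideanSpace.single i 1))
            * W1 V (t,x) := fun i =>
      ibp i ((hpdv i).differentiable (by simp)) (hwsm.differentiable (by simp)) (I2 i) (I1 i) (I3 i)
    have hibpg : ∀ i : Fin d, ∫ x, (starRingEnd ℂ) (pd (v t) i x) * pd (g t) i x
        = - ∫ x, (starRingEnd ℂ) (fderiv ℝ (pd (v t) i) x (EuclideanSpace.single i 1))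
            * g t x := fun i =>
      ibp i ((hpdv i).differentiable (by simp)) (hgt.differentiable (by simp)) (I5 i) (I4 i) (I6 i)
    have hsum_spd_w : ∑ i : Fin d, ∫ x, (starRingEnd ℂ)
        (fderiv ℝ (pd (v t) i) x (EuclideanSpace.single i 1)) * W1 V (t,x)
        = ∫ x, (starRingEnd ℂ) (lap (v t) x) * W1 V (t,x) := by
      rw [← integral_finset_sum _ (fun i _ => I2 i)]
      congr 1
      funext x
      rw [show lap (v t) x = ∑ i : Fin d,
        fderiv ℝ (pd (v t) i) x (EuclideanSpace.single i 1) from rfl]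
      rw [map_sum, Finset.sum_mul]
    have hsum_spd_g : ∑ i : Fin d, ∫ x, (starRingEnd ℂ)
        (fderiv ℝ (pd (v t) i) x (EuclideanSpace.single i 1)) * g t x
        = ∫ x, (starRingEnd ℂ) (lap (v t) x) * g t x := by
      rw [← integral_finset_sum _ (fun i _ => I5 i)]
      congr 1
      funext x
      rw [show lap (v t) x = ∑ i : Fin d,
        fderiv ℝ (pd (v t) i) x (EuclideanSpace.single i 1) from rfl]
      rw [map_sum, Finset.sum_mul]
    have hptw : ∀ x, (((starRingEnd ℂ) (((‖v t x‖:ℂ)^2) * v t x)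
        - (starRingEnd ℂ) (lap (v t) x)) * W1 V (t,x)).re
        = ((starRingEnd ℂ) (((‖v t x‖:ℂ)^2) * v t x - lap (v t) x) * g t x).im := by
      intro x
      rw [← map_sub, hsolve x]
      set z : ℂ := ((‖v t x‖:ℂ)^2) * v t x - lap (v t) x with hzdef
      have expand : (starRingEnd ℂ) z * (-Complex.I * (((‖v t x‖:ℂ)^2) * v t x + g t x
          - lap (v t) x)) = -Complex.I * ((starRingEnd ℂ) z * z)
            + -Complex.I * ((starRingEnd ℂ) z * g t x) := by
        rw [hzdef]; ring
      rw [expand, show (starRingEnd ℂ) z * z = ((Complex.normSq z : ℝ):ℂ) from by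
        rw [mul_comm, Complex.mul_conj]]
      simp [Complex.add_re, Complex.mul_re, Complex.mul_im]
    have hGx : ∀ x, Gfun V (t,x) = 2 * (∑ i : Fin d, ((starRingEnd ℂ) (pd (v t) i x)
        * fderiv ℝ (fun x' => W1 V (t,x')) x (EuclideanSpace.single i 1)).re)
        + 2 * (((starRingEnd ℂ) (((‖v t x‖:ℂ)^2) * v t x)) * W1 V (t,x)).re := by
      intro x
      have h1 : ∀ i : Fin d, PdV V i (t,x) = pd (v t) i x := fun i => (hpdsl t i x).symm
      have h2 : ∀ i : Fin d, QdV V i (t,x) = fderiv ℝ (fun x' => W1 V (t,x')) x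
          (EuclideanSpace.single i 1) := fun i =>
        (sliceX_fderiv (hW1.differentiable (by simp)) t x _).symm
      have h3 : (starRingEnd ℂ) (((‖v t x‖:ℂ)^2) * v t x) * W1 V (t,x)
          = ((‖v t x‖^2 : ℝ):ℂ) * ((starRingEnd ℂ) (v t x) * W1 V (t,x)) := by
        rw [map_mul, ← Complex.ofReal_pow, Complex.conj_ofReal]; ring
      simp only [Gfun, h1, h2, h3]
      have h4 : ∀ r : ℝ, ∀ u : ℂ, (((r:ℝ):ℂ) * u).re = r * u.re := by
        intro r u; simp [Complex.mul_re]
      rw [h4]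
      have h5 : ‖V (t,x)‖ = ‖v t x‖ := rfl
      rw [h5]
      ring
    calc (∫ x, Gfun V (t, x))
        = ∫ x, (2 * (∑ i : Fin d, ((starRingEnd ℂ) (pd (v t) i x)
            * fderiv ℝ (fun x' => W1 V (t,x')) x (EuclideanSpace.single i 1)).re)
          + 2 * (((starRingEnd ℂ) (((‖v t x‖:ℂ)^2) * v t x)) * W1 V (t,x)).re) :=
          integral_congr_ae (Filter.Eventually.of_forall hGx)
      _ = 2 * (∑ i : Fin d, ∫ x, ((starRingEnd ℂ) (pd (v t) i x)
            * fderiv ℝ (fun x' => W1 V (t,x')) x (EuclideanSpace.single i 1)).re)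
          + 2 * ∫ x, (((starRingEnd ℂ) (((‖v t x‖:ℂ)^2) * v t x)) * W1 V (t,x)).re := by
          rw [integral_add ((integrable_finset_sum _ (fun i _ => intRe (I1 i))).const_mul 2)
            ((intRe I7).const_mul 2), integral_const_mul, integral_const_mul,
            integral_finset_sum _ (fun i _ => intRe (I1 i))]
      _ = 2 * (∑ i : Fin d, (∫ x, (starRingEnd ℂ) (pd (v t) i x)
            * fderiv ℝ (fun x' => W1 V (t,x')) x (EuclideanSpace.single i 1)).re)
          + 2 * (∫ x, ((starRingEnd ℂ) (((‖v t x‖:ℂ)^2) * v t x)) * W1 V (t,x)).re := by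
          rw [cintegral_re I7]
          congr 2
          exact Finset.sum_congr rfl (fun i _ => cintegral_re (I1 i))
      _ = 2 * (∑ i : Fin d, (- ∫ x, (starRingEnd ℂ)
            (fderiv ℝ (pd (v t) i) x (EuclideanSpace.single i 1)) * W1 V (t,x)).re)
          + 2 * (∫ x, ((starRingEnd ℂ) (((‖v t x‖:ℂ)^2) * v t x)) * W1 V (t,x)).re := by
          congr 2
          exact Finset.sum_congr rfl (fun i _ => by rw [hibpw i])
      _ = 2 * ((∫ x, ((starRingEnd ℂ) (((‖v t x‖:ℂ)^2) * v t x)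
            - (starRingEnd ℂ) (lap (v t) x)) * W1 V (t,x)).re) := by
          have hs : ∑ i : Fin d, (- ∫ x, (starRingEnd ℂ)
              (fderiv ℝ (pd (v t) i) x (EuclideanSpace.single i 1)) * W1 V (t,x)).re
              = - (∫ x, (starRingEnd ℂ) (lap (v t) x) * W1 V (t,x)).re := by
            rw [← hsum_spd_w]
            simp [Complex.neg_re]
          have hsplit : (∫ x, ((starRingEnd ℂ) (((‖v t x‖:ℂ)^2) * v t x)
              - (starRingEnd ℂ) (lap (v t) x)) * W1 V (t,x))
              = (∫ x, (starRingEnd ℂ) (((‖v t x‖:ℂ)^2) * v t x) * W1 V (t,x))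
                - ∫ x, (starRingEnd ℂ) (lap (v t) x) * W1 V (t,x) := by
            rw [show (fun x => ((starRingEnd ℂ) (((‖v t x‖:ℂ)^2)*v t x)
                - (starRingEnd ℂ) (lap (v t) x)) * W1 V (t,x))
                = fun x => (starRingEnd ℂ) (((‖v t x‖:ℂ)^2)*v t x) * W1 V (t,x)
                  - (starRingEnd ℂ) (lap (v t) x) * W1 V (t,x) from
                funext fun x => by ring]
            exact integral_sub I7 I10
          rw [hs, hsplit, Complex.sub_re]
          ring
      _ = 2 * (∫ x, (((starRingEnd ℂ) (((‖v t x‖:ℂ)^2) * v t x)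
            - (starRingEnd ℂ) (lap (v t) x)) * W1 V (t,x)).re) := by
          rw [cintegral_re I13]
      _ = 2 * (∫ x, ((starRingEnd ℂ) (((‖v t x‖:ℂ)^2) * v t x - lap (v t) x) * g t x).im) := by
          congr 1
          exact integral_congr_ae (Filter.Eventually.of_forall hptw)
      _ = 2 * (∫ x, (starRingEnd ℂ) (((‖v t x‖:ℂ)^2) * v t x - lap (v t) x) * g t x).im := by
          rw [cintegral_im I12]
      _ = 2 * (∫ x, (starRingEnd ℂ) (((‖v t x‖:ℂ)^2) * v t x) * g t x).im
          - 2 * (∫ x, (starRingEnd ℂ) (lap (v t) x) * g t x).im := by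
          rw [show (fun x => (starRingEnd ℂ) (((‖v t x‖:ℂ)^2)*v t x - lap (v t) x) * g t x)
            = fun x => (starRingEnd ℂ) (((‖v t x‖:ℂ)^2)*v t x) * g t x
              - (starRingEnd ℂ) (lap (v t) x) * g t x from
            funext fun x => by rw [map_sub]; ring]
          rw [integral_sub I8 I11, Complex.sub_im]
          ring
      _ = -2 * (∫ x, (((‖v t x‖ : ℂ) ^ 2) * v t x * (starRingEnd ℂ) (g t x)
          - ∑ i : Fin d, (starRingEnd ℂ) (pd (v t) i x) * pd (g t) i x)).im := by
          rw [integral_sub I9 (integrable_finset_sum _ (fun i _ => I4 i)), Complex.sub_im]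
          have e1 : (∫ x, (((‖v t x‖:ℂ)^2) * v t x) * (starRingEnd ℂ) (g t x))
              = (starRingEnd ℂ) (∫ x, (starRingEnd ℂ) (((‖v t x‖:ℂ)^2) * v t x) * g t x) := by
            rw [← integral_conj]
            congr 1
            funext x
            simp [map_mul]
          have e2 : (∫ x, ∑ i : Fin d, (starRingEnd ℂ) (pd (v t) i x) * pd (g t) i x)
              = - ∫ x, (starRingEnd ℂ) (lap (v t) x) * g t x := by
            rw [integral_finset_sum _ (fun i _ => I4 i),
              Finset.sum_congr rfl (fun i _ => hibpg i), ← hsum_spd_g]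
            simp
          rw [e1, e2]
          simp only [Complex.conj_im, Complex.neg_im]
          ring
  rw [hval] at hkey
  exact hkey

end
end
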